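/- arXiv:1805.05873 — 2 statements merged into one kernel-verified Lean document; each statement's English description precedes it below -/
import Mathlib

section
/- Let M : ℝ → Matrix (Fin n) (Fin n) ℝ be a differentiable symmetric-matrix-valued curve along a trajectory q(t), and define the Coriolis matrix C via the Christoffel symbols, i.e., C(q,v)_{ij} = Σ_k (1/2)(∂M_{ij}/∂q_k + ∂M_{ik}/∂q_j − ∂M_{jk}/∂q_i) v_k. Then the matrix N(q,v) = Ṁ(q) − 2C(q,v) is skew-symmetric for every q and v. -/
open Matrix

/-!
Expanding the Christoffel form of `C`, the terms `∂ₖ M_ij vₖ` cancel against `Ṁ`, leaving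
`(Ṁ - 2C)_ij = ∑ₖ (∂ᵢ M_jk - ∂ⱼ M_ik) vₖ`, which is of the form `X - Xᵀ`.
-/

theorem sub_two_smul_christoffel_eq {ι R : Type*} [Fintype ι] [Field R] [NeZero (2 : R)]
    (dM : ι → Matrix ι ι R) (v : ι → R) (Mdot C : Matrix ι ι R)
    (hMdot : ∀ i j, Mdot i j = ∑ k, dM k i j * v k)
    (hC : ∀ i j, C i j = ∑ k, (1/2) * (dM k i j + dM j i k - dM i j k) * v k) :
    Mdot - 2 • C =
      of (fun i j => ∑ k, dM i j k * v k) - (of fun i j => ∑ k, dM i j k * v k)ᵀ := by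
  ext i j
  simp only [Matrix.sub_apply, Matrix.smul_apply, transpose_apply, of_apply, hMdot, hC,
    nsmul_eq_mul, Nat.cast_ofNat, Finset.mul_sum, ← Finset.sum_sub_distrib]
  refine Finset.sum_congr rfl fun k _ => ?_
  field_simp
  ring

theorem christoffel_skew_general (n : ℕ)
    (v : Fin n → ℝ)
    (dM : Fin n → Matrix (Fin n) (Fin n) ℝ)
    (Mdot C : Matrix (Fin n) (Fin n) ℝ)
    (hMdot : ∀ i j, Mdot i j = ∑ k, dM k i j * v k)
    (hC : ∀ i j, C i j = ∑ k, (1/2) * (dM k i j + dM j i k - dM i j k) * v k) :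
    (Mdot - 2 • C)ᵀ = -(Mdot - 2 • C) := by
  rw [sub_two_smul_christoffel_eq dM v Mdot C hMdot hC, transpose_sub, transpose_transpose,
    neg_sub]

/-- With the Coriolis matrix defined via Christoffel symbols,
`N(q,v) = Ṁ(q) - 2 C(q,v)` is skew-symmetric. -/
theorem christoffel_skew (n : ℕ) (M : (Fin n → ℝ) → Matrix (Fin n) (Fin n) ℝ)
    (hsymm : ∀ p, (M p).IsSymm)
    (q v : Fin n → ℝ)
    (l : Fin n → Fin n → ((Fin n → ℝ) →L[ℝ] ℝ))
    (hM : ∀ i j, HasFDerivAt (fun p => M p i j) (l i j) q)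
    (dM : Fin n → Matrix (Fin n) (Fin n) ℝ)
    (hdM : ∀ k i j, dM k i j = l i j (Pi.single k 1))
    (Mdot C : Matrix (Fin n) (Fin n) ℝ)
    (hMdot : ∀ i j, Mdot i j = ∑ k, dM k i j * v k)
    (hC : ∀ i j, C i j = ∑ k, (1/2) * (dM k i j + dM j i k - dM i j k) * v k) :
    (Mdot - 2 • C)ᵀ = -(Mdot - 2 • C) :=
  christoffel_skew_general n v dM Mdot C hMdot hC
end

section
/- Consider the interconnected closed-loop system: q̃̇ = −Πq̃ + s, M(q)ṡ + C(q,q̇)s + Ks = −Πq̃ − B K_ζ(ζ − ζ_d), ζ̇ = −K_ζ(ζ − ζ_d) + Bᵀs, with Π, K, K_ζ symmetric positive definite, M(q) symmetric positive definite, Ṁ − 2C skew-symmetric, and B any real matrix of compatible dimensions. Then V = (1/2)q̃ᵀΠq̃ + (1/2)sᵀM(q)s + (1/2)(ζ−ζ_d)ᵀK_ζ(ζ−ζ_d) satisfies V̇ = −q̃ᵀΠ²q̃ − sᵀKs − (ζ−ζ_d)ᵀK_ζ²(ζ−ζ_d) along solutions. -/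
/-!
Differentiate the three quadratic storages separately: the symmetric ones give `xᵀA ẋ`, the
inertia term gives in addition `½ sᵀṀs`. Substituting the dynamics, skew-symmetry of `Ṁ - 2C`
turns `½ sᵀṀs` into `sᵀCs`, which cancels the Coriolis term, and the coupling terms
`± q̃ᵀΠs` and `± sᵀB K_ζ(ζ - ζ_d)` cancel in pairs because `Π` and `K_ζ` are symmetric.
-/

open Matrix

namespace Matrix

theorem PosDef.isSymm {ι : Type*} {A : Matrix ι ι ℝ} (hA : A.PosDef) : A.IsSymm :=
  isHermitian_iff_isSymm.mp hA.isHermitian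

variable {ι κ : Type*} [Fintype ι] [Fintype κ]

theorem IsSymm.dotProduct_mulVec_comm {R : Type*} [CommSemiring R] {A : Matrix ι ι R}
    (hA : A.IsSymm) (x y : ι → R) :
    x ⬝ᵥ A *ᵥ y = y ⬝ᵥ A *ᵥ x := by
  rw [dotProduct_mulVec, ← mulVec_transpose, hA.eq, dotProduct_comm]

theorem IsSymm.dotProduct_mulVec_transpose_mulVec {R : Type*} [CommSemiring R]
    {A : Matrix κ κ R} (hA : A.IsSymm) (B : Matrix ι κ R) (x : κ → R) (y : ι → R) :
    x ⬝ᵥ A *ᵥ Bᵀ *ᵥ y = y ⬝ᵥ B *ᵥ A *ᵥ x := by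
  rw [hA.dotProduct_mulVec_comm, mulVec_transpose, dotProduct_mulVec y, dotProduct_comm]

theorem dotProduct_mulVec_self_eq_zero_of_transpose_eq_neg {S : Matrix ι ι ℝ} (hS : Sᵀ = -S)
    (x : ι → ℝ) : x ⬝ᵥ S *ᵥ x = 0 := by
  have h : x ⬝ᵥ Sᵀ *ᵥ x = x ⬝ᵥ S *ᵥ x := by
    rw [mulVec_transpose, dotProduct_comm, ← dotProduct_mulVec]
  rw [hS, neg_mulVec, dotProduct_neg] at h
  linarith

theorem hasDerivAt_dotProduct_mulVec {A : ℝ → Matrix ι κ ℝ} {A' : Matrix ι κ ℝ}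
    {x : ℝ → ι → ℝ} {y : ℝ → κ → ℝ} {x' : ι → ℝ} {y' : κ → ℝ} {t : ℝ}
    (hA : ∀ i j, HasDerivAt (fun t => A t i j) (A' i j) t)
    (hx : HasDerivAt x x' t) (hy : HasDerivAt y y' t) :
    HasDerivAt (fun t => x t ⬝ᵥ A t *ᵥ y t)
      (x' ⬝ᵥ A t *ᵥ y t + x t ⬝ᵥ A' *ᵥ y t + x t ⬝ᵥ A t *ᵥ y') t := by
  have hx' := hasDerivAt_pi.mp hx
  have hy' := hasDerivAt_pi.mp hy
  simp only [dotProduct, mulVec, Finset.mul_sum, ← Finset.sum_add_distrib]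
  refine HasDerivAt.fun_sum fun i _ => HasDerivAt.fun_sum fun j _ => ?_
  exact ((hx' i).fun_mul ((hA i j).fun_mul (hy' j))).congr_deriv (by ring)

theorem IsSymm.hasDerivAt_half_dotProduct_mulVec_self {M : ℝ → Matrix ι ι ℝ} {M' : Matrix ι ι ℝ}
    {x : ℝ → ι → ℝ} {x' : ι → ℝ} {t : ℝ} (hM : (M t).IsSymm)
    (hM' : ∀ i j, HasDerivAt (fun t => M t i j) (M' i j) t) (hx : HasDerivAt x x' t) :
    HasDerivAt (fun t => (1 / 2 : ℝ) * (x t ⬝ᵥ M t *ᵥ x t))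
      (x t ⬝ᵥ M t *ᵥ x' + (1 / 2 : ℝ) * (x t ⬝ᵥ M' *ᵥ x t)) t := by
  refine ((hasDerivAt_dotProduct_mulVec hM' hx hx).const_mul _).congr_deriv ?_
  rw [hM.dotProduct_mulVec_comm x']
  ring

theorem IsSymm.hasDerivAt_half_dotProduct_const_mulVec_self {A : Matrix ι ι ℝ}
    {x : ℝ → ι → ℝ} {x' : ι → ℝ} {t : ℝ} (hA : A.IsSymm) (hx : HasDerivAt x x' t) :
    HasDerivAt (fun t => (1 / 2 : ℝ) * (x t ⬝ᵥ A *ᵥ x t)) (x t ⬝ᵥ A *ᵥ x') t := by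
  simpa using hA.hasDerivAt_half_dotProduct_mulVec_self (M := fun _ => A) (M' := 0)
    (fun i j => hasDerivAt_const t (A i j)) hx

end Matrix

theorem node_edge_closed_loop_lyapunov_general (a b : ℕ)
    (M Mdot C : ℝ → Matrix (Fin a) (Fin a) ℝ)
    (Pm K : Matrix (Fin a) (Fin a) ℝ) (Kζ : Matrix (Fin b) (Fin b) ℝ)
    (hPm : Pm.PosDef) (hKζ : Kζ.PosDef)
    (hMsymm : ∀ t, (M t).IsSymm)
    (hMd : ∀ t i j, HasDerivAt (fun t => M t i j) (Mdot t i j) t)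
    (hskew : ∀ t, (Mdot t - 2 • C t)ᵀ = -(Mdot t - 2 • C t))
    (B : Matrix (Fin a) (Fin b) ℝ) (ζd : Fin b → ℝ)
    (qt s sdot : ℝ → Fin a → ℝ) (ζ : ℝ → Fin b → ℝ)
    (hqt : ∀ t, HasDerivAt qt (-(Pm.mulVec (qt t)) + s t) t)
    (hs : ∀ t, HasDerivAt s (sdot t) t)
    (hode : ∀ t, (M t).mulVec (sdot t) + (C t).mulVec (s t) + K.mulVec (s t)
        = -(Pm.mulVec (qt t)) - B.mulVec (Kζ.mulVec (ζ t - ζd)))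
    (hζ : ∀ t, HasDerivAt ζ (-(Kζ.mulVec (ζ t - ζd)) + Bᵀ.mulVec (s t)) t) :
    ∀ t, HasDerivAt
        (fun t => (1/2 : ℝ) * (qt t ⬝ᵥ Pm.mulVec (qt t))
          + (1/2 : ℝ) * (s t ⬝ᵥ (M t).mulVec (s t))
          + (1/2 : ℝ) * ((ζ t - ζd) ⬝ᵥ Kζ.mulVec (ζ t - ζd)))
        (-(qt t ⬝ᵥ (Pm * Pm).mulVec (qt t)) - s t ⬝ᵥ K.mulVec (s t)
          - (ζ t - ζd) ⬝ᵥ (Kζ * Kζ).mulVec (ζ t - ζd)) t := by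
  intro t
  have hVq := hPm.isSymm.hasDerivAt_half_dotProduct_const_mulVec_self (hqt t)
  have hVs := (hMsymm t).hasDerivAt_half_dotProduct_mulVec_self (hMd t) (hs t)
  have hVζ := hKζ.isSymm.hasDerivAt_half_dotProduct_const_mulVec_self ((hζ t).sub_const ζd)
  refine ((hVq.add hVs).add hVζ).congr_deriv ?_
  have hinertia : s t ⬝ᵥ M t *ᵥ sdot t = -(s t ⬝ᵥ Pm *ᵥ qt t)
      - s t ⬝ᵥ B *ᵥ Kζ *ᵥ (ζ t - ζd) - s t ⬝ᵥ C t *ᵥ s t - s t ⬝ᵥ K *ᵥ s t := by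
    have h := congrArg (s t ⬝ᵥ ·) (hode t)
    simp only [dotProduct_add, dotProduct_sub, dotProduct_neg] at h
    linarith
  have hcoriolis : s t ⬝ᵥ Mdot t *ᵥ s t = 2 * (s t ⬝ᵥ C t *ᵥ s t) := by
    have h := dotProduct_mulVec_self_eq_zero_of_transpose_eq_neg (hskew t) (s t)
    rw [sub_mulVec, dotProduct_sub, smul_mulVec, dotProduct_smul, nsmul_eq_mul,
      Nat.cast_ofNat] at h
    linarith
  have hPm_cross := hPm.isSymm.dotProduct_mulVec_comm (qt t) (s t)
  have hB_cross := hKζ.isSymm.dotProduct_mulVec_transpose_mulVec B (ζ t - ζd) (s t)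
  simp only [mulVec_add, mulVec_neg, dotProduct_add, dotProduct_neg, ← mulVec_mulVec]
  linarith

/-- Main stability result: for the node-edge interconnected closed loop, the total
storage `V = (1/2) q̃ᵀ Pm q̃ + (1/2) sᵀ M(q) s + (1/2)(ζ-ζ_d)ᵀ K_ζ (ζ-ζ_d)` satisfies
`V̇ = -q̃ᵀ Pm² q̃ - sᵀ K s - (ζ-ζ_d)ᵀ K_ζ² (ζ-ζ_d)` along solutions. -/
theorem node_edge_closed_loop_lyapunov (a b : ℕ)
    (M Mdot C : ℝ → Matrix (Fin a) (Fin a) ℝ)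
    (Pm K : Matrix (Fin a) (Fin a) ℝ) (Kζ : Matrix (Fin b) (Fin b) ℝ)
    (hPm : Pm.PosDef) (hK : K.PosDef) (hKζ : Kζ.PosDef)
    (hMsymm : ∀ t, (M t).IsSymm) (hMpd : ∀ t, (M t).PosDef)
    (hMd : ∀ t i j, HasDerivAt (fun t => M t i j) (Mdot t i j) t)
    (hskew : ∀ t, (Mdot t - 2 • C t)ᵀ = -(Mdot t - 2 • C t))
    (B : Matrix (Fin a) (Fin b) ℝ) (ζd : Fin b → ℝ)
    (qt s sdot : ℝ → Fin a → ℝ) (ζ : ℝ → Fin b → ℝ)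
    (hqt : ∀ t, HasDerivAt qt (-(Pm.mulVec (qt t)) + s t) t)
    (hs : ∀ t, HasDerivAt s (sdot t) t)
    (hode : ∀ t, (M t).mulVec (sdot t) + (C t).mulVec (s t) + K.mulVec (s t)
        = -(Pm.mulVec (qt t)) - B.mulVec (Kζ.mulVec (ζ t - ζd)))
    (hζ : ∀ t, HasDerivAt ζ (-(Kζ.mulVec (ζ t - ζd)) + Bᵀ.mulVec (s t)) t) :
    ∀ t, HasDerivAt
        (fun t => (1/2 : ℝ) * (qt t ⬝ᵥ Pm.mulVec (qt t))
          + (1/2 : ℝ) * (s t ⬝ᵥ (M t).mulVec (s t))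
          + (1/2 : ℝ) * ((ζ t - ζd) ⬝ᵥ Kζ.mulVec (ζ t - ζd)))
        (-(qt t ⬝ᵥ (Pm * Pm).mulVec (qt t)) - s t ⬝ᵥ K.mulVec (s t)
          - (ζ t - ζd) ⬝ᵥ (Kζ * Kζ).mulVec (ζ t - ζd)) t :=
  node_edge_closed_loop_lyapunov_general a b M Mdot C Pm K Kζ hPm hKζ hMsymm hMd hskew B ζd qt s
    sdot ζ hqt hs hode hζ
end
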